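/- arXiv:2205.12824 — 5 statements merged into one kernel-verified Lean document; each statement's English description precedes it below -/
import Mathlib

section
/- Let T be a rooted tree in which every vertex has at least countably infinitely many children whose subtrees are infinite. Then T contains a subdivision of T_∞, the tree in which every vertex has countably infinite degree. -/
open SimpleGraph

/-- `T_∞`: the tree in which every vertex has countably infinite degree,
realized on finite sequences of naturals, each vertex joined to its children. -/
def Tinf : SimpleGraph (List ℕ) :=
  SimpleGraph.fromRel (fun a b => ∃ n : ℕ, b = a ++ [n])

/-- `T` contains a subdivision of `G`: there are branch vertices (an injective
image of the vertices of `G`) joined, for each edge of `G`, by paths of `T`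
which are internally disjoint and internally avoid the branch vertices. -/
def ContainsSubdivision {α β : Type} (G : SimpleGraph α) (T : SimpleGraph β) : Prop :=
  ∃ (f : α → β) (p : ∀ a b, G.Adj a b → T.Walk (f a) (f b)),
    Function.Injective f ∧
    (∀ a b (h : G.Adj a b), (p a b h).IsPath) ∧
    (∀ a b (h : G.Adj a b) (c : α), f c ∈ (p a b h).support → c = a ∨ c = b) ∧
    (∀ a b (h : G.Adj a b) (a' b' : α) (h' : G.Adj a' b'),
      s(a, b) ≠ s(a', b') → ∀ x : β,
        x ∈ (p a b h).support → x ∈ (p a' b' h').support →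
          (x = f a ∨ x = f b) ∧ (x = f a' ∨ x = f b'))

/-- Every vertex on a geodesic from `root` is at distance at most the geodesic's length. -/
lemma dist_le_of_mem_support {β : Type} {T : SimpleGraph β} {root v u : β}
    (p : T.Walk root v) (hu : u ∈ p.support) : T.dist root u ≤ p.length := by
  classical
  calc T.dist root u ≤ (p.takeUntil u hu).length := SimpleGraph.dist_le _
    _ ≤ p.length := SimpleGraph.Walk.length_takeUntil_le p hu

/-- In a tree, a vertex has a unique parent (neighbour closer to the root). -/
lemma parent_unique {β : Type} {T : SimpleGraph β} (hT : T.IsTree) (root : β)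
    {v v' w : β} (hv : T.Adj v w) (hv' : T.Adj v' w)
    (hd : T.dist root w = T.dist root v + 1)
    (hd' : T.dist root w = T.dist root v' + 1) : v = v' := by
  obtain ⟨p, hp, hl⟩ := hT.isConnected.exists_path_of_dist root v
  obtain ⟨p', hp', hl'⟩ := hT.isConnected.exists_path_of_dist root v'
  have hwp : w ∉ p.support := by
    intro hw
    have := dist_le_of_mem_support p hw
    omega
  have hwp' : w ∉ p'.support := by
    intro hw
    have := dist_le_of_mem_support p' hw
    omega
  let R : T.Walk w root := Walk.cons hv.symm p.reverse
  let R' : T.Walk w root := Walk.cons hv'.symm p'.reverse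
  have hR : R.IsPath := by
    rw [Walk.cons_isPath_iff]
    exact ⟨hp.reverse, by simpa using hwp⟩
  have hR' : R'.IsPath := by
    rw [Walk.cons_isPath_iff]
    exact ⟨hp'.reverse, by simpa using hwp'⟩
  have hRR' : R = R' := by
    obtain ⟨q, -, hq⟩ := hT.existsUnique_path w root
    rw [hq R hR, hq R' hR']
  have hsup : p.reverse.support = p'.reverse.support := by
    have hs : R.support = R'.support := congrArg Walk.support hRR'
    simpa [R, R', Walk.support_cons] using hs
  have hhead := congrArg List.head? hsup
  rw [Walk.support_eq_cons p.reverse, Walk.support_eq_cons p'.reverse] at hhead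
  simpa using hhead

/-- Iterate a "child" function along a (reversed) list of naturals. -/
def chain {β : Type} (root : β) (child : β → ℕ → β) : List ℕ → β
  | [] => root
  | n :: l => child (chain root child l) n

/-- If `T` is a rooted tree in which every vertex has infinitely many children
whose subtrees (sets of descendants) are infinite, then `T` contains a
subdivision of `T_∞`. -/
theorem stmt_7 {β : Type} (T : SimpleGraph β) (hT : T.IsTree) (root : β)
    (h : ∀ v : β,
      {w : β | T.Adj v w ∧ T.dist root w = T.dist root v + 1 ∧
        {u : β | T.dist root u = T.dist root w + T.dist w u}.Infinite}.Infinite) :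
    ContainsSubdivision Tinf T := by
  classical
  set child : β → ℕ → β := fun v n => (Set.Infinite.natEmbedding _ (h v) n).1 with hchild_def
  have hchild : ∀ v n, T.Adj v (child v n) ∧ T.dist root (child v n) = T.dist root v + 1 :=
    fun v n => ⟨(Set.Infinite.natEmbedding _ (h v) n).2.1, (Set.Infinite.natEmbedding _ (h v) n).2.2.1⟩
  have hchild_inj : ∀ v, Function.Injective (child v) := by
    intro v a b hab
    exact (Set.Infinite.natEmbedding _ (h v)).injective (Subtype.ext hab)
  set g : List ℕ → β := chain root child with hg_def
  have hgdist : ∀ l : List ℕ, T.dist root (g l) = l.length := by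
    intro l
    induction l with
    | nil => simp [hg_def, chain]
    | cons n l ih =>
      have := (hchild (g l) n).2
      simp only [hg_def, chain] at this ⊢
      rw [this]; rw [hg_def] at ih; rw [ih]; simp
  have hgadj : ∀ (l : List ℕ) (n : ℕ), T.Adj (g l) (g (n :: l)) := by
    intro l n
    exact (hchild (g l) n).1
  have hginj : Function.Injective g := by
    intro l l' hll'
    induction l generalizing l' with
    | nil =>
      cases l' with
      | nil => rfl
      | cons n' l' =>
        have h1 := hgdist ([] : List ℕ)
        have h2 := hgdist (n' :: l')
        rw [hll'] at h1
        rw [h1] at h2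
        simp at h2
    | cons n l ih =>
      cases l' with
      | nil =>
        have h1 := hgdist (n :: l)
        have h2 := hgdist ([] : List ℕ)
        rw [hll'] at h1
        rw [h1] at h2
        simp at h2
      | cons n' l' =>
        have hll : g l = g l' := by
          refine parent_unique hT root (v := g l) (v' := g l') (w := g (n :: l))
            (hgadj l n) ?_ (hchild (g l) n).2 ?_
          · rw [hll']; exact hgadj l' n'
          · rw [hll']; exact (hchild (g l') n').2
        have hn : n = n' := by
          apply hchild_inj (g l)
          have : child (g l) n = child (g l') n' := hll'
          rw [← hll] at this
          exact this
        rw [hn, ih (by rw [hll] : g l = g l')]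
  -- the branch vertex map
  refine ⟨fun a => g a.reverse, ?_, ?_⟩
  · -- adjacency in Tinf gives adjacency in T
    have adjT : ∀ a b : List ℕ, Tinf.Adj a b → T.Adj (g a.reverse) (g b.reverse) := by
      intro a b hab
      rw [Tinf, SimpleGraph.fromRel_adj] at hab
      obtain ⟨hne, hor⟩ := hab
      rcases hor with ⟨n, rfl⟩ | ⟨n, rfl⟩
      · have : (a ++ [n]).reverse = n :: a.reverse := by simp
        rw [this]
        exact hgadj a.reverse n
      · have : (b ++ [n]).reverse = n :: b.reverse := by simp
        rw [this]
        exact (hgadj b.reverse n).symm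
    exact fun a b hab => Walk.cons (adjT a b hab) Walk.nil
  have hfinj : Function.Injective (fun a : List ℕ => g a.reverse) := by
    intro a b hab
    exact List.reverse_injective (hginj hab)
  refine ⟨hfinj, ?_, ?_, ?_⟩
  · intro a b hab
    rw [Walk.cons_isPath_iff]
    constructor
    · exact Walk.IsPath.nil
    · simp only [Walk.support_nil, List.mem_singleton]
      exact fun heq => hab.ne (hfinj (a₁ := a) (a₂ := b) heq)
  · intro a b hab c hc
    simp only [Walk.support_cons, Walk.support_nil, List.mem_cons, List.mem_singleton,
      List.not_mem_nil, or_false] at hc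
    rcases hc with hc | hc
    · exact Or.inl (hfinj (a₁ := c) (a₂ := a) hc)
    · exact Or.inr (hfinj (a₁ := c) (a₂ := b) hc)
  · intro a b hab a' b' hab' hne x hx hx'
    simp only [Walk.support_cons, Walk.support_nil, List.mem_cons, List.mem_singleton,
      List.not_mem_nil, or_false] at hx hx'
    exact ⟨hx, hx'⟩
end

section
/- Let s be a bijection of ℕ preserving each set {1,...,2^i}. In the graph G_s (vertex set ℤ, path edges {n,n+1}, chord edges {2n,−2s(n)} for n ≥ 1), the doubly infinite path ..., −2, −1, 0, 1, 2, ... is the unique two-way infinite induced-spanning path with the property that no two consecutive vertices on it both have degree 3 in G_s. -/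
/-!
Both endpoints of a chord `{2n, -2s(n)}` have degree `3`, so a spanning path with no two
consecutive degree-`3` vertices uses only the edges `{m, m + 1}`. An injective walk on `ℤ` with
unit steps can never turn back, as that would revisit a vertex, so it is a translation or a
reflection of the standard path.
-/

/-- The graph `G_s` on `ℤ`: the doubly infinite path together with a chord from
`2n` to `-2s(n)` for every `n ≥ 1`. -/
def Gs (s : ℕ → ℕ) : SimpleGraph ℤ :=
  SimpleGraph.fromRel (fun m m' =>
    m' = m + 1 ∨ ∃ n : ℕ, 1 ≤ n ∧ m = 2 * (n : ℤ) ∧ m' = -(2 * (s n : ℤ)))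

/-- `s` is a bijection of `ℕ` mapping `{1,…,2^i}` onto itself for every `i`. -/
def SegPreserving (s : ℕ → ℕ) : Prop :=
  Function.Bijective s ∧
    ∀ i : ℕ, 1 ≤ i → s '' {n | 1 ≤ n ∧ n ≤ 2 ^ i} = {n | 1 ≤ n ∧ n ≤ 2 ^ i}

/-- A vertex of `G_s` has degree `3`. -/
def DegThree (s : ℕ → ℕ) (v : ℤ) : Prop := ((Gs s).neighborSet v).ncard = 3

lemma Int.eq_add_mul_of_forall_add_one {f : ℤ → ℤ} {d : ℤ} (hf : ∀ k, f (k + 1) = f k + d)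
    (k : ℤ) : f k = f 0 + k * d := by
  have hper : Function.Periodic (fun k => f k - k * d) 1 := fun k => by
    simp only [hf]; ring
  have := hper.int_mul k 0
  simp only [Int.cast_id, zero_add, mul_one, zero_mul, sub_zero] at this
  linarith

lemma Int.eq_add_or_eq_sub_of_injective_of_unit_steps {f : ℤ → ℤ} (hf : Function.Injective f)
    (hstep : ∀ k, f (k + 1) = f k + 1 ∨ f (k + 1) = f k - 1) :
    ∃ c, (∀ k, f k = k + c) ∨ (∀ k, f k = c - k) := by
  have hper : Function.Periodic (fun k => f (k + 1) - f k) 1 := fun k => by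
    have hne : f (k + 1 + 1) ≠ f k := fun h => by have := hf h; omega
    have := hstep k
    have := hstep (k + 1)
    dsimp only
    omega
  have hconst (k : ℤ) : f (k + 1) = f k + (f 1 - f 0) := by
    have := hper.int_mul k 0
    simp only [Int.cast_id, zero_add, mul_one] at this
    omega
  refine ⟨f 0, ?_⟩
  rcases hstep 0 with h | h <;> rw [zero_add] at h
  · exact Or.inl fun k => by rw [Int.eq_add_mul_of_forall_add_one hconst k, h]; ring
  · exact Or.inr fun k => by rw [Int.eq_add_mul_of_forall_add_one hconst k, h]; ring

namespace Gs

variable {s : ℕ → ℕ}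

lemma neighborSet_two_mul {n : ℕ} (hn : 1 ≤ n) :
    (Gs s).neighborSet (2 * (n : ℤ)) =
      {2 * (n : ℤ) - 1, 2 * (n : ℤ) + 1, -(2 * (s n : ℤ))} := by
  ext w
  simp only [SimpleGraph.mem_neighborSet, Gs, SimpleGraph.fromRel_adj, Set.mem_insert_iff,
    Set.mem_singleton_iff]
  constructor
  · rintro ⟨-, (h | ⟨m, -, hm, rfl⟩) | (h | ⟨m, -, rfl, hm⟩)⟩
    · omega
    · obtain rfl : m = n := by omega
      simp
    · omega
    · omega
  · rintro (rfl | rfl | rfl)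
    · exact ⟨by omega, Or.inr (Or.inl (by ring))⟩
    · exact ⟨by omega, Or.inl (Or.inl rfl)⟩
    · exact ⟨by omega, Or.inl (Or.inr ⟨n, hn, rfl, rfl⟩)⟩

lemma neighborSet_neg_two_mul (hs : Function.Injective s) {n : ℕ} (hn : 1 ≤ n) :
    (Gs s).neighborSet (-(2 * (s n : ℤ))) =
      {-(2 * (s n : ℤ)) - 1, -(2 * (s n : ℤ)) + 1, 2 * (n : ℤ)} := by
  ext w
  simp only [SimpleGraph.mem_neighborSet, Gs, SimpleGraph.fromRel_adj, Set.mem_insert_iff,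
    Set.mem_singleton_iff]
  constructor
  · rintro ⟨-, (h | ⟨m, hm1, hm, rfl⟩) | (h | ⟨m, -, rfl, hm⟩)⟩
    · omega
    · omega
    · omega
    · obtain rfl : m = n := hs (by omega)
      simp
  · rintro (rfl | rfl | rfl)
    · exact ⟨by omega, Or.inr (Or.inl (by ring))⟩
    · exact ⟨by omega, Or.inl (Or.inl rfl)⟩
    · exact ⟨by omega, Or.inr (Or.inr ⟨n, hn, rfl, rfl⟩)⟩

lemma degThree_two_mul {n : ℕ} (hn : 1 ≤ n) : DegThree s (2 * (n : ℤ)) := by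
  rw [DegThree, neighborSet_two_mul hn, Set.ncard_eq_three]
  exact ⟨_, _, _, by omega, by omega, by omega, rfl⟩

lemma degThree_neg_two_mul (hs : Function.Injective s) {n : ℕ} (hn : 1 ≤ n) :
    DegThree s (-(2 * (s n : ℤ))) := by
  rw [DegThree, neighborSet_neg_two_mul hs hn, Set.ncard_eq_three]
  exact ⟨_, _, _, by omega, by omega, by omega, rfl⟩

lemma eq_add_one_or_eq_sub_one_of_adj (hs : Function.Injective s) {a b : ℤ}
    (hab : (Gs s).Adj a b) (hdeg : ¬ (DegThree s a ∧ DegThree s b)) :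
    b = a + 1 ∨ b = a - 1 := by
  simp only [Gs, SimpleGraph.fromRel_adj] at hab
  obtain ⟨-, (h | ⟨n, hn, rfl, rfl⟩) | (h | ⟨n, hn, rfl, rfl⟩)⟩ := hab
  · exact Or.inl h
  · exact absurd ⟨degThree_two_mul hn, degThree_neg_two_mul hs hn⟩ hdeg
  · exact Or.inr (by omega)
  · exact absurd ⟨degThree_neg_two_mul hs hn, degThree_two_mul hn⟩ hdeg

end Gs

/-- The standard doubly infinite path `…,-1,0,1,…` is the unique two-way
infinite spanning path of `G_s` (given by an enumeration `p : ℤ ≃ ℤ` of the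
vertices with consecutive vertices adjacent) on which no two consecutive
vertices both have degree `3`; uniqueness holds up to translation and
reflection of the parametrisation. -/
theorem stmt_12 (s : ℕ → ℕ) (hs : SegPreserving s) (p : ℤ ≃ ℤ)
    (hadj : ∀ k : ℤ, (Gs s).Adj (p k) (p (k + 1)))
    (hdeg : ∀ k : ℤ, ¬ (DegThree s (p k) ∧ DegThree s (p (k + 1)))) :
    ∃ c : ℤ, (∀ k : ℤ, p k = k + c) ∨ (∀ k : ℤ, p k = c - k) :=
  Int.eq_add_or_eq_sub_of_injective_of_unit_steps p.injective fun k =>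
    Gs.eq_add_one_or_eq_sub_one_of_adj hs.1.1 (hadj k) (hdeg k)
end

section
/- Let s and t be bijections of ℕ preserving each set {1,...,2^i}, and let G_s(i), G_t(i) be the induced subgraphs of G_s, G_t on the interval [−2^{i+1}, 2^{i+1}]. Then G_s(i) and G_t(i) are isomorphic if and only if the restrictions of s and t to {1,...,2^i} either coincide or are mutually inverse permutations. -/
/-- `G_s(i)`: the induced subgraph of `G_s` on the interval `[-2^(i+1), 2^(i+1)]`. -/
def Gsi (s : ℕ → ℕ) (i : ℕ) : SimpleGraph {m : ℤ | -(2 ^ (i + 1)) ≤ m ∧ m ≤ 2 ^ (i + 1)} :=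
  SimpleGraph.induce {m : ℤ | -(2 ^ (i + 1)) ≤ m ∧ m ≤ 2 ^ (i + 1)} (Gs s)

/-
For `i ≥ 1` write `M = 2^i` and `N = 2M`. In `G_s(i)` the vertices of degree three are exactly the
nonzero even vertices strictly between `-N` and `N`, and `0` is the only vertex of degree two whose
neighbours have degree two and whose vertices at distance two have degree three. So an isomorphism
`φ : G_s(i) ≅ G_t(i)` fixes `0` and sends `1` to `±1`. The reflection `n ↦ -n` is an isomorphism
`G_s(i) ≅ G_t(i)` whenever `t ∘ s = id` on `{1,…,M}`, in particular `G_t(i) ≅ G_{t⁻¹}(i)`;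
composing with it we may assume `φ 1 = 1`. If `φ` fixes `k - 1` and `k`, it fixes `k + 1` as long
as `k + 2 < N`: otherwise `k + 1` would go to the chord endpoint `-N` and `k + 2` to the odd vertex
`-N + 1`. Conjugating by the reflection gives the same on the negative side, so `φ` fixes
`[2 - N, N - 2]`, hence every chord at `2n` with `n < M`; thus `t = s` on `{1,…,M-1}`, and at `M`
because both are permutations. For `i = 0` the graph is a five-cycle if `s 1 = 1` and a path if
`s 1 = 2`.
-/

open Set SimpleGraph

section Adjacency

variable {s : ℕ → ℕ} {a b : ℤ}

theorem gs_adj_iff : (Gs s).Adj a b ↔ b = a + 1 ∨ a = b + 1 ∨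
    (∃ n : ℕ, 1 ≤ n ∧ a = 2 * n ∧ b = -(2 * s n)) ∨
      ∃ n : ℕ, 1 ≤ n ∧ b = 2 * n ∧ a = -(2 * s n) := by
  rw [Gs, fromRel_adj, or_or_or_comm, or_assoc, and_iff_right_iff_imp]
  rintro (h | h | ⟨n, hn, rfl, rfl⟩ | ⟨n, hn, rfl, rfl⟩) <;> omega

theorem gs_adj_of_pos (ha : 0 < a) (h : (Gs s).Adj a b) :
    b = a - 1 ∨ b = a + 1 ∨ ∃ n : ℕ, a = 2 * n ∧ b = -(2 * s n) := by
  rcases gs_adj_iff.1 h with h | h | ⟨n, -, h⟩ | ⟨n, -, -, rfl⟩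
  · omega
  · omega
  · exact .inr (.inr ⟨n, h⟩)
  · omega

theorem gs_adj_of_nonpos (ha : a ≤ 0) (h : (Gs s).Adj a b) :
    b = a - 1 ∨ b = a + 1 ∨ ∃ n : ℕ, 1 ≤ n ∧ b = 2 * n ∧ a = -(2 * s n) := by
  rcases gs_adj_iff.1 h with h | h | ⟨n, hn, rfl, -⟩ | h
  · omega
  · omega
  · omega
  · exact .inr (.inr h)

theorem gs_adj_of_odd (ha : a % 2 = 1) (h : (Gs s).Adj a b) : b = a - 1 ∨ b = a + 1 := by
  rcases gs_adj_iff.1 h with h | h | ⟨n, -, rfl, -⟩ | ⟨n, -, -, rfl⟩ <;> omega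

theorem gs_adj_add_one : (Gs s).Adj a (a + 1) :=
  gs_adj_iff.2 (.inl rfl)

theorem gs_adj_sub_one : (Gs s).Adj a (a - 1) :=
  gs_adj_iff.2 (.inr (.inl (by ring)))

theorem gs_adj_chord {n : ℕ} (hn : 1 ≤ n) : (Gs s).Adj (2 * n) (-(2 * s n)) :=
  gs_adj_iff.2 (.inr (.inr (.inl ⟨n, hn, rfl, rfl⟩)))

theorem apply_eq_of_gs_adj {n m : ℕ} (hn : 1 ≤ n) (h : (Gs s).Adj (2 * n) (-(2 * m))) :
    s n = m := by
  rcases gs_adj_of_pos (by omega) h with h | h | ⟨k, hk, h⟩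
  · omega
  · omega
  · obtain rfl : k = n := by omega
    omega

end Adjacency

section Branching

variable {V W : Type*} {G : SimpleGraph V} {G' : SimpleGraph W}

theorem SimpleGraph.Iso.encard_neighborSet (φ : G ≃g G') (v : V) :
    (G'.neighborSet (φ v)).encard = (G.neighborSet v).encard := by
  rw [← φ.image_neighborSet, φ.injective.encard_image]

theorem encard_neighborSet_induce_le_two {S : Set V} {v p q : V} (hv : v ∈ S)
    (h : ∀ w ∈ S, G.Adj v w → w = p ∨ w = q) :
    ((G.induce S).neighborSet ⟨v, hv⟩).encard ≤ 2 :=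
  calc ((G.induce S).neighborSet ⟨v, hv⟩).encard
      = ((↑) '' (G.induce S).neighborSet ⟨v, hv⟩ : Set V).encard :=
        (Subtype.val_injective.encard_image _).symm
    _ ≤ ({p, q} : Set V).encard := encard_le_encard <| by
        rintro _ ⟨⟨w, hw⟩, hadj, rfl⟩
        exact h w hw hadj
    _ ≤ 2 := (encard_insert_le _ _).trans (by rw [encard_singleton]; rfl)

theorem two_lt_encard_neighborSet_induce {S : Set V} {v x y z : V} (hv : v ∈ S) (hx : x ∈ S)
    (hy : y ∈ S) (hz : z ∈ S) (hxy : x ≠ y) (hxz : x ≠ z) (hyz : y ≠ z)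
    (hvx : G.Adj v x) (hvy : G.Adj v y) (hvz : G.Adj v z) :
    2 < ((G.induce S).neighborSet ⟨v, hv⟩).encard :=
  calc (2 : ℕ∞) < 3 := by norm_num
    _ = ({⟨x, hx⟩, ⟨y, hy⟩, ⟨z, hz⟩} : Set S).encard := (encard_eq_three.2
        ⟨_, _, _, Subtype.coe_ne_coe.1 hxy, Subtype.coe_ne_coe.1 hxz, Subtype.coe_ne_coe.1 hyz,
          rfl⟩).symm
    _ ≤ _ := encard_le_encard <| by rintro w (rfl | rfl | rfl) <;> assumption

def IsBranch (G : SimpleGraph V) (v : V) : Prop :=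
  2 < (G.neighborSet v).encard

theorem SimpleGraph.Iso.isBranch_iff (φ : G ≃g G') {v : V} :
    IsBranch G' (φ v) ↔ IsBranch G v := by
  rw [IsBranch, IsBranch, φ.encard_neighborSet]

def IsCenter (G : SimpleGraph V) (v : V) : Prop :=
  ¬IsBranch G v ∧ (∀ u, G.Adj v u → ¬IsBranch G u) ∧
    ∀ u w, G.Adj v u → G.Adj u w → w ≠ v → IsBranch G w

theorem IsCenter.iso {v : V} (h : IsCenter G v) (φ : G ≃g G') : IsCenter G' (φ v) := by
  obtain ⟨hv, hnbr, hnext⟩ := h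
  refine ⟨by rwa [φ.isBranch_iff], fun u hu => ?_, fun u w hu hw hwv => ?_⟩
  · rw [← φ.apply_symm_apply u, φ.isBranch_iff]
    exact hnbr _ (by rwa [← φ.map_adj_iff, φ.apply_symm_apply])
  · rw [← φ.apply_symm_apply w, φ.isBranch_iff]
    refine hnext (φ.symm u) _ ?_ ?_ ?_
    · rwa [← φ.map_adj_iff, φ.apply_symm_apply]
    · rwa [← φ.map_adj_iff, φ.apply_symm_apply, φ.apply_symm_apply]
    · rwa [Ne, φ.symm_apply_eq]

end Branching

def FixesVal {α : Type*} {S : Set α} (f : S → S) (a : α) : Prop :=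
  ∀ ha : a ∈ S, f ⟨a, ha⟩ = ⟨a, ha⟩

theorem Set.EqOn.of_eqOn_diff_singleton {α β : Type*} {f g : α → β} {I : Set α} {J : Set β}
    {a : α} (ha : a ∈ I) (hg : SurjOn g I J) (hf : InjOn f I) (hfm : MapsTo f I J)
    (h : EqOn f g (I \ {a})) : EqOn f g I := by
  intro x hx
  by_cases hxa : x = a
  · subst hxa
    obtain ⟨y, hy, hyx⟩ := hg (hfm hx)
    by_cases hyx' : y = x
    · rw [← hyx, hyx']
    · exact absurd (hf hy hx ((h ⟨hy, hyx'⟩).trans hyx)) hyx'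
  · exact h ⟨hx, hxa⟩

/-- `Gsi s i` is `GsIcc s (2 ^ (i + 1))` by definition. -/
abbrev GsIcc (s : ℕ → ℕ) (N : ℤ) : SimpleGraph (Icc (-N) N) :=
  (Gs s).induce (Icc (-N) N)

section Box

variable {s t : ℕ → ℕ} {M : ℕ} {N : ℤ}

theorem eq_neg_one_or_one_of_gs_adj_zero (hN : N = 2 * M) (hs : MapsTo s (Icc 1 M) (Icc 1 M))
    {u : ℤ} (hu : u ∈ Icc (-N) N) (h : (Gs s).Adj 0 u) : u = -1 ∨ u = 1 := by
  obtain ⟨-, hu₂⟩ := mem_Icc.1 hu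
  rcases gs_adj_of_nonpos le_rfl h with h | h | ⟨n, hn, rfl, h0⟩
  · exact .inl (by omega)
  · exact .inr (by omega)
  · obtain ⟨hsn, -⟩ := hs ⟨hn, (by omega : n ≤ M)⟩
    omega

theorem encard_neighborSet_gsIcc_le_two (hN : N = 2 * M) (hs : BijOn s (Icc 1 M) (Icc 1 M))
    {a : ℤ} (ha : a ∈ Icc (-N) N) (h : ¬(a % 2 = 0 ∧ a ≠ 0 ∧ -N < a ∧ a < N)) :
    ((GsIcc s N).neighborSet ⟨a, ha⟩).encard ≤ 2 := by
  obtain ⟨ha₁, ha₂⟩ := mem_Icc.1 ha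
  obtain hodd | rfl | ⟨haN, hpos⟩ | ⟨haN, hneg⟩ :
      a % 2 = 1 ∨ a = 0 ∨ a = N ∧ 0 < a ∨ a = -N ∧ a < 0 := by omega
  · exact encard_neighborSet_induce_le_two ha fun w _ h => gs_adj_of_odd hodd h
  · exact encard_neighborSet_induce_le_two ha fun w hw h =>
      eq_neg_one_or_one_of_gs_adj_zero hN hs.mapsTo hw h
  · refine encard_neighborSet_induce_le_two (p := N - 1) (q := -(2 * s M)) ha
      fun w hw h => ?_
    obtain ⟨-, hw₂⟩ := mem_Icc.1 hw
    rcases gs_adj_of_pos hpos h with h | h | ⟨n, hn, rfl⟩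
    · exact .inl (by omega)
    · omega
    · obtain rfl : n = M := by omega
      exact .inr rfl
  · obtain ⟨n₀, hn₀, hsn₀⟩ := hs.surjOn (⟨by omega, le_rfl⟩ : M ∈ Icc 1 M)
    refine encard_neighborSet_induce_le_two (p := -N + 1) (q := 2 * n₀) ha fun w hw h => ?_
    obtain ⟨hw₁, hw₂⟩ := mem_Icc.1 hw
    rcases gs_adj_of_nonpos hneg.le h with h | h | ⟨n, hn, rfl, h'⟩
    · omega
    · exact .inl (by omega)
    · obtain rfl : n = n₀ := hs.injOn ⟨hn, by omega⟩ hn₀ (by omega)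
      exact .inr rfl

theorem two_lt_encard_neighborSet_gsIcc (hN : N = 2 * M) (hs : BijOn s (Icc 1 M) (Icc 1 M))
    {a : ℤ} (ha : a ∈ Icc (-N) N) (h : a % 2 = 0 ∧ a ≠ 0 ∧ -N < a ∧ a < N) :
    2 < ((GsIcc s N).neighborSet ⟨a, ha⟩).encard := by
  obtain ⟨he, h0, hlo, hhi⟩ := h
  rcases lt_or_gt_of_ne h0 with hneg | hpos
  · obtain ⟨m, rfl⟩ : ∃ m : ℕ, a = -(2 * m) := ⟨(-a / 2).toNat, by omega⟩
    obtain ⟨n, ⟨hn₁, hn₂⟩, rfl⟩ := hs.surjOn (⟨by omega, by omega⟩ : m ∈ Icc 1 M)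
    exact two_lt_encard_neighborSet_induce ha (x := -(2 * s n : ℤ) - 1) (y := -(2 * s n : ℤ) + 1)
      (z := 2 * n) (mem_Icc.2 ⟨by omega, by omega⟩) (mem_Icc.2 ⟨by omega, by omega⟩)
      (mem_Icc.2 ⟨by omega, by omega⟩) (by omega) (by omega) (by omega)
      gs_adj_sub_one gs_adj_add_one (gs_adj_chord hn₁).symm
  · obtain ⟨n, rfl⟩ : ∃ n : ℕ, a = 2 * n := ⟨(a / 2).toNat, by omega⟩
    obtain ⟨hsn₁, hsn₂⟩ := hs.mapsTo (⟨by omega, by omega⟩ : n ∈ Icc 1 M)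
    exact two_lt_encard_neighborSet_induce ha (x := 2 * (n : ℤ) - 1) (y := 2 * (n : ℤ) + 1)
      (z := -(2 * s n)) (mem_Icc.2 ⟨by omega, by omega⟩) (mem_Icc.2 ⟨by omega, by omega⟩)
      (mem_Icc.2 ⟨by omega, by omega⟩) (by omega) (by omega) (by omega)
      gs_adj_sub_one gs_adj_add_one (gs_adj_chord (by omega))

theorem isBranch_gsIcc_iff (hN : N = 2 * M) (hs : BijOn s (Icc 1 M) (Icc 1 M))
    {a : ℤ} (ha : a ∈ Icc (-N) N) :
    IsBranch (GsIcc s N) ⟨a, ha⟩ ↔ a % 2 = 0 ∧ a ≠ 0 ∧ -N < a ∧ a < N := by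
  refine ⟨fun hb => ?_, two_lt_encard_neighborSet_gsIcc hN hs ha⟩
  by_contra hc
  exact hb.not_ge (encard_neighborSet_gsIcc_le_two hN hs ha hc)

theorem isCenter_gsIcc_zero (hM : 2 ≤ M) (hN : N = 2 * M) (hs : BijOn s (Icc 1 M) (Icc 1 M))
    (h0 : (0 : ℤ) ∈ Icc (-N) N) : IsCenter (GsIcc s N) ⟨0, h0⟩ := by
  have hbr := fun {b : ℤ} (hb : b ∈ Icc (-N) N) => isBranch_gsIcc_iff hN hs hb
  have hnbr := fun {u : ℤ} (hu : u ∈ Icc (-N) N) =>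
    eq_neg_one_or_one_of_gs_adj_zero hN hs.mapsTo hu
  refine ⟨fun h => ((hbr h0).1 h).2.1 rfl, fun ⟨u, hu⟩ hadj h => ?_,
    fun ⟨u, hu⟩ ⟨w, hw⟩ hadj hadj' hw0 => ?_⟩
  · have := (hbr hu).1 h
    have := hnbr hu hadj
    omega
  · have h₁ := hnbr hu hadj
    have h₂ := gs_adj_of_odd (a := u) (b := w) (by omega) hadj'
    have h₃ : w ≠ 0 := fun h => hw0 (Subtype.ext h)
    obtain ⟨hw₁, hw₂⟩ := mem_Icc.1 hw
    exact (hbr hw).2 (by omega)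

theorem eq_zero_of_isCenter_gsIcc (hM : 2 ≤ M) (hN : N = 2 * M)
    (hs : BijOn s (Icc 1 M) (Icc 1 M)) {a : ℤ} (ha : a ∈ Icc (-N) N)
    (h : IsCenter (GsIcc s N) ⟨a, ha⟩) : a = 0 := by
  have hbr := fun {b : ℤ} (hb : b ∈ Icc (-N) N) => isBranch_gsIcc_iff hN hs hb
  obtain ⟨ha₁, ha₂⟩ := mem_Icc.1 ha
  obtain ⟨hnb, hnbr, hnext⟩ := h
  by_contra h0
  have hnb := mt (hbr ha).2 hnb
  by_cases hodd : a % 2 = 1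
  · have h₁ := mt (hbr _).2 (hnbr ⟨a - 1, mem_Icc.2 ⟨by omega, by omega⟩⟩ gs_adj_sub_one)
    have h₂ := mt (hbr _).2 (hnbr ⟨a + 1, mem_Icc.2 ⟨by omega, by omega⟩⟩ gs_adj_add_one)
    omega
  -- `±N` is no center: its chord partner would have to be `∓N`, whose path neighbour is odd.
  obtain haN | haN : a = N ∨ a = -N := by omega
  · obtain ⟨hsM₁, hsM₂⟩ := hs.mapsTo (⟨by omega, le_rfl⟩ : M ∈ Icc 1 M)
    have hu : -(2 * (s M : ℤ)) ∈ Icc (-N) N := mem_Icc.2 ⟨by omega, by omega⟩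
    have hau : (Gs s).Adj a (-(2 * s M)) := by
      rw [haN, hN]
      exact gs_adj_chord (by omega)
    have hu' := mt (hbr hu).2 (hnbr ⟨_, hu⟩ hau)
    have hw : -(2 * (s M : ℤ)) + 1 ∈ Icc (-N) N := mem_Icc.2 ⟨by omega, by omega⟩
    have hw' := (hbr hw).1 (hnext ⟨_, hu⟩ ⟨_, hw⟩ hau gs_adj_add_one
      (fun h => by simp only [Subtype.mk.injEq] at h; omega))
    omega
  · obtain ⟨n₀, ⟨hn₀₁, hn₀₂⟩, hsn₀⟩ := hs.surjOn (⟨by omega, le_rfl⟩ : M ∈ Icc 1 M)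
    have hu : 2 * (n₀ : ℤ) ∈ Icc (-N) N := mem_Icc.2 ⟨by omega, by omega⟩
    have hau : (Gs s).Adj a (2 * n₀) := by
      rw [haN, hN, ← hsn₀]
      exact (gs_adj_chord hn₀₁).symm
    have hu' := mt (hbr hu).2 (hnbr ⟨_, hu⟩ hau)
    have hw : 2 * (n₀ : ℤ) - 1 ∈ Icc (-N) N := mem_Icc.2 ⟨by omega, by omega⟩
    have hw' := (hbr hw).1 (hnext ⟨_, hu⟩ ⟨_, hw⟩ hau gs_adj_sub_one
      (fun h => by simp only [Subtype.mk.injEq] at h; omega))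
    omega

theorem apply_add_one_ne_neg (hN : N = 2 * M) (hs : BijOn s (Icc 1 M) (Icc 1 M))
    (ht : BijOn t (Icc 1 M) (Icc 1 M)) (φ : GsIcc s N ≃g GsIcc t N) {k : ℤ} (hk : 1 ≤ k)
    (hkN : k + 2 < N) (hfix : FixesVal φ k) (h : k + 1 ∈ Icc (-N) N) :
    (φ ⟨k + 1, h⟩ : ℤ) ≠ -N := by
  intro hz
  have hm₁ : k ∈ Icc (-N) N := mem_Icc.2 ⟨by omega, by omega⟩
  have hm₂ : k + 2 ∈ Icc (-N) N := mem_Icc.2 ⟨by omega, by omega⟩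
  have hadj : (Gs t).Adj k (φ ⟨k + 1, h⟩ : ℤ) := by
    have := φ.map_adj_iff.2 (show (GsIcc s N).Adj ⟨k, hm₁⟩ ⟨k + 1, h⟩ from gs_adj_add_one)
    rwa [hfix hm₁] at this
  obtain ⟨n, hkn, htn⟩ : ∃ n : ℕ, k = 2 * n ∧ t n = M := by
    rw [hz] at hadj
    rcases gs_adj_of_pos (by omega) hadj with h | h | ⟨n, h₁, h₂⟩
    · omega
    · omega
    · exact ⟨n, h₁, by omega⟩
  generalize hw : φ ⟨k + 2, hm₂⟩ = w
  obtain ⟨c, hc⟩ := w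
  obtain ⟨hc₁, hc₂⟩ := mem_Icc.1 hc
  have hadj' : (Gs t).Adj (φ ⟨k + 1, h⟩ : ℤ) c := by
    have := φ.map_adj_iff.2 (show (GsIcc s N).Adj ⟨k + 1, h⟩ ⟨k + 2, hm₂⟩ from
      (gs_adj_iff.2 (.inl (by ring)) : (Gs s).Adj (k + 1) (k + 2)))
    rwa [hw] at this
  rw [hz] at hadj'
  have hc' := (isBranch_gsIcc_iff hN hs hm₂).2 (by omega)
  rw [← φ.isBranch_iff, hw, isBranch_gsIcc_iff hN ht] at hc'
  rcases gs_adj_of_nonpos (by omega) hadj' with rfl | rfl | ⟨m, hm, rfl, hmn⟩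
  · omega
  · omega
  obtain rfl : m = n := ht.injOn ⟨hm, by omega⟩ ⟨by omega, by omega⟩ (by omega)
  have : k + 2 = k := congrArg Subtype.val <|
    φ.injective (hw.trans ((Subtype.ext (by dsimp only; omega)).trans (hfix hm₁).symm))
  omega

theorem fixesVal_add_one (hN : N = 2 * M) (hs : BijOn s (Icc 1 M) (Icc 1 M))
    (ht : BijOn t (Icc 1 M) (Icc 1 M)) (φ : GsIcc s N ≃g GsIcc t N) {k : ℤ} (hk : 1 ≤ k)
    (hkN : k + 2 < N) (h₀ : FixesVal φ (k - 1)) (h₁ : FixesVal φ k) : FixesVal φ (k + 1) := by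
  intro h
  have hm₁ : k ∈ Icc (-N) N := mem_Icc.2 ⟨by omega, by omega⟩
  generalize hz : φ ⟨k + 1, h⟩ = z
  obtain ⟨b, hb⟩ := z
  have hadj : (Gs t).Adj k b := by
    have := φ.map_adj_iff.2 (show (GsIcc s N).Adj ⟨k, hm₁⟩ ⟨k + 1, h⟩ from gs_adj_add_one)
    rwa [h₁ hm₁, hz] at this
  rcases gs_adj_of_pos (by omega) hadj with rfl | rfl | ⟨n, hkn, rfl⟩
  · have : k + 1 = k - 1 := congrArg Subtype.val (φ.injective (hz.trans (h₀ hb).symm))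
    omega
  · rfl
  obtain ⟨htn₁, htn₂⟩ := ht.mapsTo (⟨by omega, by omega⟩ : n ∈ Icc 1 M)
  have hbr := mt (isBranch_gsIcc_iff hN hs h).1 (by omega)
  rw [← φ.isBranch_iff, hz, isBranch_gsIcc_iff hN ht] at hbr
  have hval : (φ ⟨k + 1, h⟩ : ℤ) = -(2 * t n) := congrArg Subtype.val hz
  exact absurd (hval.trans (by omega)) (apply_add_one_ne_neg hN hs ht φ hk hkN h₁ h)

theorem fixesVal_of_nonneg (hN : N = 2 * M) (hs : BijOn s (Icc 1 M) (Icc 1 M))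
    (ht : BijOn t (Icc 1 M) (Icc 1 M)) (φ : GsIcc s N ≃g GsIcc t N) (h₀ : FixesVal φ 0)
    (h₁ : FixesVal φ 1) {a : ℤ} (ha₀ : 0 ≤ a) (ha : a ≤ N - 2) : FixesVal φ a := by
  suffices h : ∀ k : ℤ, 1 ≤ k → k ≤ N - 2 → FixesVal φ (k - 1) ∧ FixesVal φ k by
    rcases eq_or_lt_of_le ha₀ with rfl | ha₀
    · exact h₀
    · exact (h a ha₀ ha).2
  intro k hk
  induction k, hk using Int.leInduction with
  | base => exact fun _ => ⟨by simpa using h₀, h₁⟩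
  | succ k hk ih =>
    intro hkN
    obtain ⟨hk₀, hk₁⟩ := ih (by omega)
    exact ⟨by simpa using hk₁, fixesVal_add_one hN hs ht φ hk (by omega) hk₀ hk₁⟩

theorem fixesVal_neg_one (hN : N = 2 * M) (ht : MapsTo t (Icc 1 M) (Icc 1 M))
    (φ : GsIcc s N ≃g GsIcc t N) (h₀ : FixesVal φ 0) (h₁ : FixesVal φ 1) : FixesVal φ (-1) := by
  intro h
  have h0 : (0 : ℤ) ∈ Icc (-N) N := mem_Icc.2 ⟨by omega, by omega⟩
  generalize hz : φ ⟨-1, h⟩ = z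
  obtain ⟨b, hb⟩ := z
  have := φ.map_adj_iff.2 (show (GsIcc s N).Adj ⟨0, h0⟩ ⟨-1, h⟩ from
    (gs_adj_iff.2 (.inr (.inl (by ring))) : (Gs s).Adj 0 (-1)))
  rw [h₀ h0, hz] at this
  rcases eq_neg_one_or_one_of_gs_adj_zero hN ht hb this with rfl | rfl
  · rfl
  · have : (-1 : ℤ) = 1 := congrArg Subtype.val (φ.injective (hz.trans (h₁ hb).symm))
    omega

theorem gs_adj_neg (hN : N = 2 * M) (hs : MapsTo s (Icc 1 M) (Icc 1 M))
    (hts : LeftInvOn t s (Icc 1 M)) {a b : ℤ} (ha : a ∈ Icc (-N) N) (hb : b ∈ Icc (-N) N)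
    (h : (Gs s).Adj a b) : (Gs t).Adj (-a) (-b) := by
  obtain ⟨ha₁, ha₂⟩ := mem_Icc.1 ha
  obtain ⟨hb₁, hb₂⟩ := mem_Icc.1 hb
  rcases gs_adj_iff.1 h with rfl | rfl | ⟨n, hn, rfl, rfl⟩ | ⟨n, hn, rfl, rfl⟩
  · exact gs_adj_iff.2 (.inr (.inl (by ring)))
  · exact gs_adj_iff.2 (.inl (by ring))
  · have hn' : n ∈ Icc 1 M := ⟨hn, by omega⟩
    have := (gs_adj_chord (s := t) (hs hn').1).symm
    rw [hts hn'] at this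
    simpa using this
  · have hn' : n ∈ Icc 1 M := ⟨hn, by omega⟩
    have := gs_adj_chord (s := t) (hs hn').1
    rw [hts hn'] at this
    simpa using this

def negIso (hN : N = 2 * M) (hs : BijOn s (Icc 1 M) (Icc 1 M))
    (ht : MapsTo t (Icc 1 M) (Icc 1 M)) (hts : LeftInvOn t s (Icc 1 M)) :
    GsIcc s N ≃g GsIcc t N where
  toEquiv := (Equiv.neg ℤ).subtypeEquiv fun a => by
    simp only [mem_Icc, Equiv.neg_apply]
    constructor <;> intro h <;> omega
  map_rel_iff' {a b} := by
    refine ⟨fun h => ?_, gs_adj_neg hN hs.mapsTo hts a.2 b.2⟩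
    have hneg (x : Icc (-N) N) : -(x : ℤ) ∈ Icc (-N) N := by
      obtain ⟨h₁, h₂⟩ := mem_Icc.1 x.2
      exact mem_Icc.2 ⟨by omega, by omega⟩
    simpa using gs_adj_neg hN ht (hs.surjOn.leftInvOn_of_rightInvOn hts) (hneg a) (hneg b) h

theorem eqOn_of_fixesVal (hM : 1 ≤ M) (hN : N = 2 * M) (hs : BijOn s (Icc 1 M) (Icc 1 M))
    (ht : BijOn t (Icc 1 M) (Icc 1 M)) (φ : GsIcc s N ≃g GsIcc t N)
    (hφ : ∀ a, -(N - 2) ≤ a → a ≤ N - 2 → FixesVal φ a) : EqOn t s (Icc 1 M) := by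
  refine EqOn.of_eqOn_diff_singleton (a := M) ⟨hM, le_rfl⟩ hs.surjOn ht.injOn ht.mapsTo ?_
  rintro n ⟨⟨hn₁, hn₂⟩, hnM⟩
  replace hnM : n < M := lt_of_le_of_ne hn₂ hnM
  obtain ⟨hsn₁, hsn₂⟩ := hs.mapsTo (⟨hn₁, hn₂⟩ : n ∈ Icc 1 M)
  obtain ⟨htn₁, htn₂⟩ := ht.mapsTo (⟨hn₁, hn₂⟩ : n ∈ Icc 1 M)
  have ha : 2 * (n : ℤ) ∈ Icc (-N) N := mem_Icc.2 ⟨by omega, by omega⟩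
  have hφa := hφ _ (by omega) (by omega) ha
  -- `-N` is the only possible chord endpoint at `2n` that need not be fixed
  by_cases hsM : s n < M
  · have hb : -(2 * (s n : ℤ)) ∈ Icc (-N) N := mem_Icc.2 ⟨by omega, by omega⟩
    have := φ.map_adj_iff.2 (show (GsIcc s N).Adj ⟨_, ha⟩ ⟨_, hb⟩ from gs_adj_chord hn₁)
    rw [hφa, hφ _ (by omega) (by omega) hb] at this
    exact apply_eq_of_gs_adj hn₁ this
  by_cases htM : t n < M
  · have hc : -(2 * (t n : ℤ)) ∈ Icc (-N) N := mem_Icc.2 ⟨by omega, by omega⟩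
    have := φ.map_adj_iff.1 (show (GsIcc t N).Adj (φ ⟨_, ha⟩) (φ ⟨_, hc⟩) by
      rw [hφa, hφ _ (by omega) (by omega) hc]
      exact gs_adj_chord hn₁)
    exact (apply_eq_of_gs_adj (s := s) (m := t n) hn₁ this).symm
  omega

theorem eqOn_of_fixesVal_zero_one (hM : 2 ≤ M) (hN : N = 2 * M)
    (hs : BijOn s (Icc 1 M) (Icc 1 M)) (ht : BijOn t (Icc 1 M) (Icc 1 M))
    (φ : GsIcc s N ≃g GsIcc t N) (h₀ : FixesVal φ 0) (h₁ : FixesVal φ 1) :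
    EqOn t s (Icc 1 M) := by
  have hs' := hs.symm hs.invOn_invFunOn.symm
  have ht' := ht.symm ht.invOn_invFunOn.symm
  let ψ := ((negIso hN hs hs'.mapsTo hs.invOn_invFunOn.1).symm.trans φ).trans
    (negIso hN ht ht'.mapsTo ht.invOn_invFunOn.1)
  have hψ {a : ℤ} (ha : FixesVal φ (-a)) : FixesVal ψ a := fun h => by
    obtain ⟨h₁, h₂⟩ := mem_Icc.1 h
    have hm : -a ∈ Icc (-N) N := mem_Icc.2 ⟨by omega, by omega⟩
    have : (ψ ⟨a, h⟩ : ℤ) = -(φ ⟨-a, hm⟩ : ℤ) := rfl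
    exact Subtype.ext (by rw [this, ha hm, neg_neg])
  have hψ' {a : ℤ} (ha : FixesVal ψ a) : FixesVal φ (-a) := fun h => by
    obtain ⟨h₁, h₂⟩ := mem_Icc.1 h
    have : -(φ ⟨-a, h⟩ : ℤ) = a := congrArg Subtype.val (ha (mem_Icc.2 ⟨by omega, by omega⟩))
    exact Subtype.ext (show (φ ⟨-a, h⟩ : ℤ) = -a by omega)
  refine eqOn_of_fixesVal (by omega) hN hs ht φ fun a ha₁ ha₂ => ?_
  rcases le_total 0 a with ha | ha
  · exact fixesVal_of_nonneg hN hs ht φ h₀ h₁ ha ha₂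
  · simpa using hψ' (fixesVal_of_nonneg hN hs' ht' ψ (hψ (by simpa using h₀))
      (hψ (fixesVal_neg_one hN ht.mapsTo φ h₀ h₁)) (a := -a) (by omega) (by omega))
theorem eqOn_or_leftInvOn_of_iso (hM : 2 ≤ M) (hN : N = 2 * M)
    (hs : BijOn s (Icc 1 M) (Icc 1 M)) (ht : BijOn t (Icc 1 M) (Icc 1 M))
    (φ : GsIcc s N ≃g GsIcc t N) : EqOn t s (Icc 1 M) ∨ LeftInvOn t s (Icc 1 M) := by
  have h0 : (0 : ℤ) ∈ Icc (-N) N := mem_Icc.2 ⟨by omega, by omega⟩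
  have h1 : (1 : ℤ) ∈ Icc (-N) N := mem_Icc.2 ⟨by omega, by omega⟩
  have hφ₀ : FixesVal φ 0 := fun h => Subtype.ext <|
    eq_zero_of_isCenter_gsIcc hM hN ht (φ ⟨0, h⟩).2 ((isCenter_gsIcc_zero hM hN hs h).iso φ)
  generalize hz : φ ⟨1, h1⟩ = z
  obtain ⟨b, hb⟩ := z
  have := φ.map_adj_iff.2 (show (GsIcc s N).Adj ⟨0, h0⟩ ⟨1, h1⟩ from
    (gs_adj_iff.2 (.inl (by ring)) : (Gs s).Adj 0 1))
  rw [hφ₀ h0, hz] at this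
  rcases eq_neg_one_or_one_of_gs_adj_zero hN ht.mapsTo hb this with rfl | rfl
  · right
    have ht' := ht.symm ht.invOn_invFunOn.symm
    let ψ := φ.trans (negIso hN ht ht'.mapsTo ht.invOn_invFunOn.1)
    have hψ₀ : FixesVal ψ 0 := fun h =>
      Subtype.ext <| show -(φ ⟨0, h⟩ : ℤ) = 0 by rw [hφ₀ h, neg_zero]
    have hψ₁ : FixesVal ψ 1 := fun h =>
      Subtype.ext <| show -(φ ⟨1, h⟩ : ℤ) = 1 by rw [hz, neg_neg]
    intro n hn
    rw [← eqOn_of_fixesVal_zero_one hM hN hs ht' ψ hψ₀ hψ₁ hn]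
    exact ht.invOn_invFunOn.2 hn
  · exact .inl (eqOn_of_fixesVal_zero_one hM hN hs ht φ hφ₀ fun _ => hz)

theorem gs_adj_of_eqOn (hN : N = 2 * M) (h : EqOn t s (Icc 1 M)) {a b : ℤ}
    (ha : a ∈ Icc (-N) N) (hb : b ∈ Icc (-N) N) (hadj : (Gs s).Adj a b) : (Gs t).Adj a b := by
  obtain ⟨ha₁, ha₂⟩ := mem_Icc.1 ha
  obtain ⟨hb₁, hb₂⟩ := mem_Icc.1 hb
  rcases gs_adj_iff.1 hadj with h' | h' | ⟨n, hn, rfl, rfl⟩ | ⟨n, hn, rfl, rfl⟩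
  · exact gs_adj_iff.2 (.inl h')
  · exact gs_adj_iff.2 (.inr (.inl h'))
  · rw [← h ⟨hn, by omega⟩]
    exact gs_adj_chord hn
  · rw [← h ⟨hn, by omega⟩]
    exact (gs_adj_chord hn).symm

theorem gsIcc_congr (hN : N = 2 * M) (h : EqOn t s (Icc 1 M)) : GsIcc s N = GsIcc t N := by
  ext a b
  exact ⟨gs_adj_of_eqOn hN h a.2 b.2, gs_adj_of_eqOn hN h.symm a.2 b.2⟩

theorem nonempty_iso_gsIcc_iff (hN : N = 2 * M) (hs : BijOn s (Icc 1 M) (Icc 1 M))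
    (ht : BijOn t (Icc 1 M) (Icc 1 M)) :
    Nonempty (GsIcc s N ≃g GsIcc t N) ↔ EqOn t s (Icc 1 M) ∨ LeftInvOn t s (Icc 1 M) := by
  refine ⟨fun ⟨φ⟩ => ?_, ?_⟩
  · rcases lt_or_ge M 2 with hM | hM
    · refine .inl fun n hn => ?_
      obtain ⟨hsn₁, hsn₂⟩ := hs.mapsTo hn
      obtain ⟨htn₁, htn₂⟩ := ht.mapsTo hn
      omega
    · exact eqOn_or_leftInvOn_of_iso hM hN hs ht φ
  · rintro (h | h)
    · exact ⟨gsIcc_congr hN h ▸ Iso.refl⟩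
    · exact ⟨negIso hN hs ht.mapsTo h⟩

theorem one_lt_encard_neighborSet_gsIcc (hM : 1 ≤ M) (hN : N = 2 * M)
    (hs : BijOn s (Icc 1 M) (Icc 1 M)) {a : ℤ} (ha : a ∈ Icc (-N) N) :
    1 < ((GsIcc s N).neighborSet ⟨a, ha⟩).encard := by
  obtain ⟨ha₁, ha₂⟩ := mem_Icc.1 ha
  suffices ∃ b c : ℤ, b ∈ Icc (-N) N ∧ c ∈ Icc (-N) N ∧ b ≠ c ∧ (Gs s).Adj a b ∧ (Gs s).Adj a c by
    obtain ⟨b, c, hb, hc, hbc, hab, hac⟩ := this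
    exact one_lt_encard_iff.2 ⟨⟨b, hb⟩, ⟨c, hc⟩, hab, hac, Subtype.coe_ne_coe.1 hbc⟩
  by_cases hint : -N < a ∧ a < N
  · exact ⟨a - 1, a + 1, mem_Icc.2 ⟨by omega, by omega⟩, mem_Icc.2 ⟨by omega, by omega⟩,
      by omega, gs_adj_sub_one, gs_adj_add_one⟩
  obtain haN | haN : a = N ∨ a = -N := by omega
  · obtain ⟨hsM₁, hsM₂⟩ := hs.mapsTo (⟨hM, le_rfl⟩ : M ∈ Icc 1 M)
    refine ⟨a - 1, -(2 * s M), mem_Icc.2 ⟨by omega, by omega⟩, mem_Icc.2 ⟨by omega, by omega⟩,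
      by omega, gs_adj_sub_one, ?_⟩
    rw [haN, hN]
    exact gs_adj_chord hM
  · obtain ⟨n₀, ⟨hn₀₁, hn₀₂⟩, hsn₀⟩ := hs.surjOn (⟨hM, le_rfl⟩ : M ∈ Icc 1 M)
    refine ⟨a + 1, 2 * n₀, mem_Icc.2 ⟨by omega, by omega⟩, mem_Icc.2 ⟨by omega, by omega⟩,
      by omega, gs_adj_add_one, ?_⟩
    rw [haN, hN, ← hsn₀]
    exact (gs_adj_chord hn₀₁).symm

theorem isEmpty_iso_gsIcc_of_apply_one (hN : N = 2) (hs : s 1 = 1) (ht : t 1 = 2) :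
    IsEmpty (GsIcc s N ≃g GsIcc t N) := by
  refine ⟨fun φ => ?_⟩
  have h2 : (2 : ℤ) ∈ Icc (-N) N := mem_Icc.2 ⟨by omega, by omega⟩
  have hnbr : ∀ u ∈ (GsIcc t N).neighborSet ⟨2, h2⟩, (u : ℤ) = 1 := by
    rintro ⟨u, hu⟩ hadj
    obtain ⟨hu₁, hu₂⟩ := mem_Icc.1 hu
    show u = 1
    rcases gs_adj_of_pos (a := 2) (b := u) (by norm_num) hadj with h | h | ⟨n, hn, rfl⟩
    · exact h
    · omega
    · obtain rfl : n = 1 := by omega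
      omega
  have hle : ((GsIcc t N).neighborSet ⟨2, h2⟩).encard ≤ 1 :=
    encard_le_one_iff.2 fun u w hu hw => Subtype.ext ((hnbr u hu).trans (hnbr w hw).symm)
  have hlt := one_lt_encard_neighborSet_gsIcc (M := 1) le_rfl (by omega)
    (by rw [Icc_self]; exact bijOn_singleton.2 hs) (φ.symm ⟨2, h2⟩).2
  rw [← φ.encard_neighborSet, RelIso.apply_symm_apply] at hlt
  exact absurd hle hlt.not_ge

theorem nonempty_iso_gsIcc_two_iff (hN : N = 2) (hs : MapsTo s (Icc 1 2) (Icc 1 2))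
    (ht : BijOn t (Icc 1 2) (Icc 1 2)) :
    Nonempty (GsIcc s N ≃g GsIcc t N) ↔ EqOn t s (Icc 1 1) ∨ LeftInvOn t s (Icc 1 1) := by
  have hone {n : ℕ} (hn : n ∈ Icc 1 1) : n = 1 := le_antisymm hn.2 hn.1
  have h₁ : 1 ∈ Icc 1 2 := ⟨le_rfl, by norm_num⟩
  obtain ⟨hs₁, hs₂⟩ := hs h₁
  obtain ⟨ht₁, ht₂⟩ := ht.mapsTo h₁
  have hiff : EqOn t s (Icc 1 1) ∨ LeftInvOn t s (Icc 1 1) ↔ t 1 = s 1 := by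
    refine ⟨?_, fun h => .inl fun n hn => hone hn ▸ h⟩
    rintro (h | h)
    · exact h ⟨le_rfl, le_rfl⟩
    · have hts : t (s 1) = 1 := h ⟨le_rfl, le_rfl⟩
      rcases (show s 1 = 1 ∨ s 1 = 2 by omega) with hs1 | hs1
      · rwa [hs1] at hts ⊢
      · by_contra hne
        have := ht.injOn h₁ (hs h₁) (show t 1 = t (s 1) by omega)
        omega
  rw [hiff]
  refine ⟨fun ⟨φ⟩ => ?_, fun h => ⟨gsIcc_congr (M := 1) (N := N) (by omega) (fun n hn => hone hn ▸ h) ▸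
    Iso.refl⟩⟩
  by_contra hne
  obtain ⟨hs₁, ht₁⟩ | ⟨hs₁, ht₁⟩ : s 1 = 1 ∧ t 1 = 2 ∨ s 1 = 2 ∧ t 1 = 1 := by omega
  · exact (isEmpty_iso_gsIcc_of_apply_one hN hs₁ ht₁).false φ
  · exact (isEmpty_iso_gsIcc_of_apply_one hN ht₁ hs₁).false φ.symm

end Box

theorem SegPreserving.bijOn {s : ℕ → ℕ} (hs : SegPreserving s) {i : ℕ} (hi : 1 ≤ i) :
    BijOn s (Icc 1 (2 ^ i)) (Icc 1 (2 ^ i)) := by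
  have := hs.1.injective.injOn.bijOn_image (s := Icc 1 (2 ^ i))
  rwa [show s '' Icc 1 (2 ^ i) = Icc 1 (2 ^ i) from hs.2 i hi] at this

/-- `G_s(i)` and `G_t(i)` are isomorphic if and only if the restrictions of `s`
and `t` to `{1,…,2^i}` coincide or are mutually inverse. -/
theorem stmt_13 (s t : ℕ → ℕ) (hs : SegPreserving s) (ht : SegPreserving t) (i : ℕ) :
    Nonempty (Gsi s i ≃g Gsi t i) ↔
      ((∀ n : ℕ, 1 ≤ n → n ≤ 2 ^ i → t n = s n) ∨
        (∀ n : ℕ, 1 ≤ n → n ≤ 2 ^ i → t (s n) = n)) := by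
  have key : Nonempty (Gsi s i ≃g Gsi t i) ↔
      EqOn t s (Icc 1 (2 ^ i)) ∨ LeftInvOn t s (Icc 1 (2 ^ i)) := by
    rcases Nat.eq_zero_or_pos i with rfl | hi
    · exact nonempty_iso_gsIcc_two_iff (by norm_num) (hs.bijOn le_rfl).mapsTo (ht.bijOn le_rfl)
    · exact nonempty_iso_gsIcc_iff (by push_cast; ring) (hs.bijOn hi) (ht.bijOn hi)
  simpa only [EqOn, LeftInvOn, mem_Icc, and_imp] using key
end

section
/- Let H be a simple graph of maximum degree at most Δ and fix a vertex v of H. For each i, the number of isomorphism classes of graphs G_s(i) (over bijections s preserving initial segments {1,...,2^j}) that admit an injective graph homomorphism into H mapping the vertex 0 to v is at most Δ^{5·2^i}. -/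
lemma SimpleGraph.exists_injOn_neighborSet {V : Type*} (H : SimpleGraph V) {Δ : ℕ} (hΔ : 0 < Δ)
    (hdeg : ∀ w : V, (H.neighborSet w).Finite ∧ (H.neighborSet w).ncard ≤ Δ) :
    ∃ E : V → V → Fin Δ, ∀ w, Set.InjOn (E w) (H.neighborSet w) := by
  have : Nonempty (Fin Δ) := ⟨⟨0, hΔ⟩⟩
  have h : ∀ w, ∃ e : V → Fin Δ, Set.InjOn e (H.neighborSet w) := fun w => by
    obtain ⟨e, -, he⟩ := (hdeg w).1.exists_injOn_of_encard_le (t := (Set.univ : Set (Fin Δ))) <| by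
      rw [← (hdeg w).1.cast_ncard_eq]
      simpa using (hdeg w).2
    exact ⟨e, he⟩
  choose E hE using h
  exact ⟨E, hE⟩

section WalkCode

variable {V : Type*} {H : SimpleGraph V} {Δ : ℕ} {E : V → V → Fin Δ}

def walkCode (E : V → V → Fin Δ) (f : ℕ → V) (N : ℕ) : Fin N → Fin Δ :=
  fun k => E (f k) (f (k + 1))

lemma eqOn_of_walkCode_eq (hE : ∀ w, Set.InjOn (E w) (H.neighborSet w)) {f g : ℕ → V}
    {N : ℕ} (hf : ∀ k < N, H.Adj (f k) (f (k + 1))) (hg : ∀ k < N, H.Adj (g k) (g (k + 1)))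
    (h₀ : f 0 = g 0) (h : walkCode E f N = walkCode E g N) : ∀ k ≤ N, f k = g k := by
  intro k hk
  induction k with
  | zero => exact h₀
  | succ k ih =>
    have hfk := hf k hk
    rw [ih (by omega)] at hfk
    exact hE _ hfk (hg k hk) (by simpa [walkCode, ih (by omega)] using congrFun h ⟨k, hk⟩)

end WalkCode

lemma exists_cover_of_code {α β γ : Type*} [Nonempty α] [Fintype γ] {N : ℕ}
    (hN : Fintype.card γ ≤ N) (S : Set α) (f : α → β) (c : S → γ)
    (hc : ∀ x y : S, c x = c y → f x = f y) :
    ∃ reps : Fin N → α, ∀ x ∈ S, ∃ j, f (reps j) = f x := by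
  classical
  obtain ⟨e⟩ := Function.Embedding.nonempty_of_card_le (hN.trans (Fintype.card_fin N).ge)
  refine ⟨Function.extend (e ∘ c) Subtype.val fun _ => Classical.arbitrary α,
    fun x hx => ⟨e (c ⟨x, hx⟩), ?_⟩⟩
  have hcx : ∃ y, (e ∘ c) y = e (c ⟨x, hx⟩) := ⟨⟨x, hx⟩, rfl⟩
  rw [Function.extend_def, dif_pos hcx]
  exact hc _ _ (e.injective hcx.choose_spec)

lemma SegPreserving.mem_Icc {s : ℕ → ℕ} (hs : SegPreserving s) {j n : ℕ} (hj : 1 ≤ j)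
    (hn : 1 ≤ n) (hn' : n ≤ 2 ^ j) : 1 ≤ s n ∧ s n ≤ 2 ^ j := by
  have : s n ∈ s '' {n | 1 ≤ n ∧ n ≤ 2 ^ j} := ⟨n, ⟨hn, hn'⟩, rfl⟩
  rwa [hs.2 j hj] at this

lemma SegPreserving.apply_one_eq_one_or_two {s : ℕ → ℕ} (hs : SegPreserving s) :
    s 1 = 1 ∨ s 1 = 2 := by
  have := hs.mem_Icc le_rfl le_rfl (by norm_num)
  omega

namespace Gsi

abbrev window (i : ℕ) : Set ℤ := {m : ℤ | -(2 ^ (i + 1)) ≤ m ∧ m ≤ 2 ^ (i + 1)}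

-- Integers outside the window are clamped to an endpoint; only in-window values are ever used.
def vertex (i : ℕ) (m : ℤ) : window i :=
  Set.projIcc (-(2 ^ (i + 1))) (2 ^ (i + 1)) (by linarith [pow_pos (two_pos (α := ℤ)) (i + 1)]) m

lemma vertex_of_mem {i : ℕ} {m : ℤ} (hm : m ∈ window i) : vertex i m = ⟨m, hm⟩ :=
  Set.projIcc_of_mem _ hm

lemma natCast_mem_window {i k : ℕ} (hk : k ≤ 2 ^ (i + 1)) : (k : ℤ) ∈ window i :=
  ⟨by linarith [Int.natCast_nonneg k, pow_pos (two_pos (α := ℤ)) (i + 1)], by exact_mod_cast hk⟩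

lemma neg_natCast_mem_window {i k : ℕ} (hk : k ≤ 2 ^ (i + 1)) : -(k : ℤ) ∈ window i := by
  have : (k : ℤ) ≤ 2 ^ (i + 1) := by exact_mod_cast hk
  exact ⟨by omega, by linarith [Int.natCast_nonneg k, pow_pos (two_pos (α := ℤ)) (i + 1)]⟩

lemma adj_iff (s : ℕ → ℕ) (i : ℕ) (a b : window i) :
    (Gsi s i).Adj a b ↔ (a : ℤ) ≠ b ∧
      ((((b : ℤ) = a + 1) ∨ ∃ n : ℕ, 1 ≤ n ∧ (a : ℤ) = 2 * n ∧ (b : ℤ) = -(2 * (s n : ℤ))) ∨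
       (((a : ℤ) = b + 1) ∨ ∃ n : ℕ, 1 ≤ n ∧ (b : ℤ) = 2 * n ∧ (a : ℤ) = -(2 * (s n : ℤ)))) := by
  simp [Gsi, Gs, SimpleGraph.fromRel_adj]

lemma adj_vertex_succ (s : ℕ → ℕ) {i : ℕ} {m : ℤ} (hm : m ∈ window i)
    (hm' : m + 1 ∈ window i) : (Gsi s i).Adj (vertex i m) (vertex i (m + 1)) := by
  rw [vertex_of_mem hm, vertex_of_mem hm', adj_iff]
  exact ⟨by simp, Or.inl (Or.inl rfl)⟩

lemma adj_vertex_chord (s : ℕ → ℕ) {i n : ℕ} (hn : 1 ≤ n) (hn' : 2 * n ≤ 2 ^ (i + 1))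
    (hsn : 2 * s n ≤ 2 ^ (i + 1)) :
    (Gsi s i).Adj (vertex i ((2 * n : ℕ) : ℤ)) (vertex i (-((2 * s n : ℕ) : ℤ))) := by
  rw [vertex_of_mem (natCast_mem_window hn'), vertex_of_mem (neg_natCast_mem_window hsn), adj_iff]
  refine ⟨?_, Or.inl (Or.inr ⟨n, hn, by push_cast; rfl, by push_cast; rfl⟩)⟩
  change ((2 * n : ℕ) : ℤ) ≠ -((2 * s n : ℕ) : ℤ)
  omega

lemma eq_of_forall_eq {s s' : ℕ → ℕ} {i : ℕ} (h : ∀ n, 1 ≤ n → n ≤ 2 ^ i → s n = s' n) :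
    Gsi s i = Gsi s' i := by
  have chord_iff : ∀ x y : window i,
      (∃ n : ℕ, 1 ≤ n ∧ (x : ℤ) = 2 * n ∧ (y : ℤ) = -(2 * (s n : ℤ))) ↔
        ∃ n : ℕ, 1 ≤ n ∧ (x : ℤ) = 2 * n ∧ (y : ℤ) = -(2 * (s' n : ℤ)) := by
    intro x y
    refine exists_congr fun n => and_congr_right fun hn => and_congr_right fun hx => ?_
    have : (n : ℤ) ≤ 2 ^ i := by have := x.2.2; rw [pow_succ] at this; omega
    rw [h n hn (by exact_mod_cast this)]
  ext a b
  rw [adj_iff, adj_iff, chord_iff, chord_iff]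

lemma zero_eq_of_apply_one_eq {s s' : ℕ → ℕ} (h : s 1 = s' 1) : Gsi s 0 = Gsi s' 0 :=
  eq_of_forall_eq fun n hn hn' => by
    obtain rfl : n = 1 := by rw [pow_zero] at hn'; omega
    exact h

section EmbeddingCode

variable {V : Type*} {H : SimpleGraph V} {Δ : ℕ} {E : V → V → Fin Δ} {s : ℕ → ℕ} {i : ℕ}

lemma adj_map_natCast_succ (φ : Gsi s i →g H) {k : ℕ} (hk : k < 2 ^ (i + 1)) :
    H.Adj (φ (vertex i k)) (φ (vertex i (k + 1 : ℕ))) :=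
  φ.map_adj <| by
    push_cast
    exact adj_vertex_succ s (natCast_mem_window hk.le) (by exact_mod_cast natCast_mem_window hk)

lemma adj_map_neg_natCast_succ (φ : Gsi s i →g H) {k : ℕ} (hk : k < 2 ^ (i + 1)) :
    H.Adj (φ (vertex i (-k))) (φ (vertex i (-(k + 1 : ℕ)))) :=
  (φ.map_adj <| by
    have h := adj_vertex_succ s (neg_natCast_mem_window hk)
      (by simpa using neg_natCast_mem_window hk.le)
    push_cast at h ⊢
    simpa using h).symm

lemma adj_map_chord (hi : 1 ≤ i) (hs : SegPreserving s) (φ : Gsi s i →g H) {n : ℕ}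
    (hn : 1 ≤ n) (hn' : n ≤ 2 ^ i) :
    H.Adj (φ (vertex i ((2 * n : ℕ) : ℤ))) (φ (vertex i (-((2 * s n : ℕ) : ℤ)))) :=
  φ.map_adj <| adj_vertex_chord s hn (by rw [pow_succ]; omega)
    (by have := (hs.mem_Icc hi hn hn').2; rw [pow_succ]; omega)

lemma two_le_ncard_neighborSet (φ : Gsi s i →g H) (hφ : Function.Injective φ)
    (hfin : (H.neighborSet (φ (vertex i 0))).Finite) :
    2 ≤ (H.neighborSet (φ (vertex i 0))).ncard := by
  have hpos : 0 < 2 ^ (i + 1) := by positivity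
  have h₁ := adj_map_natCast_succ φ hpos
  have h₂ := adj_map_neg_natCast_succ φ hpos
  simp only [Nat.cast_zero, neg_zero, zero_add, Nat.cast_one] at h₁ h₂
  have hne : φ (vertex i 1) ≠ φ (vertex i (-1)) := fun h => by
    have := congrArg Subtype.val (hφ h)
    rw [vertex_of_mem (by exact_mod_cast natCast_mem_window (i := i) (k := 1) (by omega)),
      vertex_of_mem (by exact_mod_cast neg_natCast_mem_window (i := i) (k := 1) (by omega))] at this
    simp at this
  calc 2 = ({φ (vertex i 1), φ (vertex i (-1))} : Set V).ncard := (Set.ncard_pair hne).symm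
    _ ≤ _ := Set.ncard_le_ncard (Set.pair_subset h₁ h₂) hfin

variable (E) in
def embeddingCode (φ : Gsi s i →g H) :
    (Fin (2 ^ (i + 1)) → Fin Δ) × (Fin (2 ^ (i + 1)) → Fin Δ) × (Fin (2 ^ i) → Fin Δ) :=
  (walkCode E (fun k => φ (vertex i k)) _, walkCode E (fun k => φ (vertex i (-k))) _,
    fun n => E (φ (vertex i ((2 * (n + 1) : ℕ) : ℤ))) (φ (vertex i (-((2 * s (n + 1) : ℕ) : ℤ)))))

lemma eq_of_embeddingCode_eq (hE : ∀ w, Set.InjOn (E w) (H.neighborSet w)) {s' : ℕ → ℕ}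
    (hi : 1 ≤ i) (hs : SegPreserving s) (hs' : SegPreserving s') (φ : Gsi s i →g H)
    (φ' : Gsi s' i →g H) (hφ' : Function.Injective φ') (h₀ : φ (vertex i 0) = φ' (vertex i 0))
    (h : embeddingCode E φ = embeddingCode E φ') : Gsi s i = Gsi s' i := by
  have hpos := eqOn_of_walkCode_eq hE (fun _ => adj_map_natCast_succ φ)
    (fun _ => adj_map_natCast_succ φ') (by simpa using h₀) (congrArg Prod.fst h)
  have hneg := eqOn_of_walkCode_eq hE (fun _ => adj_map_neg_natCast_succ φ)
    (fun _ => adj_map_neg_natCast_succ φ') (by simpa using h₀) (congrArg (·.2.1) h)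
  refine eq_of_forall_eq fun n hn hn' => ?_
  obtain ⟨k, rfl⟩ : ∃ k, n = k + 1 := ⟨n - 1, by omega⟩
  have hsn := (hs.mem_Icc hi hn hn').2
  have hsn' := (hs'.mem_Icc hi hn hn').2
  have h2 : 2 ^ (i + 1) = 2 * 2 ^ i := pow_succ' 2 i
  have hcode : E (φ (vertex i ((2 * (k + 1) : ℕ) : ℤ))) (φ (vertex i (-((2 * s (k + 1) : ℕ) : ℤ))))
      = E (φ (vertex i ((2 * (k + 1) : ℕ) : ℤ))) (φ' (vertex i (-((2 * s' (k + 1) : ℕ) : ℤ)))) := by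
    have := congrFun (congrArg (·.2.2) h) ⟨k, by omega⟩
    simp only [embeddingCode] at this
    rwa [← hpos _ (by omega)] at this
  have hchord : φ' (vertex i (-((2 * s (k + 1) : ℕ) : ℤ))) =
      φ' (vertex i (-((2 * s' (k + 1) : ℕ) : ℤ))) := by
    rw [← hneg _ (by omega)]
    refine hE _ (adj_map_chord hi hs φ hn hn') ?_ hcode
    rw [hpos _ (by omega)]
    exact adj_map_chord hi hs' φ' hn hn'
  have := congrArg Subtype.val (hφ' hchord)
  rw [vertex_of_mem (neg_natCast_mem_window (by omega)),
    vertex_of_mem (neg_natCast_mem_window (by omega))] at this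
  simp only at this
  omega

end EmbeddingCode

end Gsi

/-- If `H` has maximum degree at most `Δ` and `v` is a fixed vertex of `H`, then
the number of isomorphism classes of graphs `G_s(i)` admitting an embedding into
`H` sending the vertex `0` to `v` is at most `Δ ^ (5 * 2 ^ i)`: there are
`Δ ^ (5 * 2 ^ i)` graphs such that every such `G_s(i)` is isomorphic to one of them. -/
theorem stmt_14 {V : Type} (H : SimpleGraph V) (Δ : ℕ)
    (hdeg : ∀ w : V, (H.neighborSet w).Finite ∧ (H.neighborSet w).ncard ≤ Δ)
    (v : V) (i : ℕ) :
    ∃ reps : Fin (Δ ^ (5 * 2 ^ i)) → (ℕ → ℕ),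
      ∀ s : ℕ → ℕ, SegPreserving s →
        (∃ φ : Gsi s i →g H, Function.Injective φ ∧
          φ ⟨0, ⟨neg_nonpos.mpr (by positivity), by positivity⟩⟩ = v) →
        ∃ j : Fin (Δ ^ (5 * 2 ^ i)), Nonempty (Gsi s i ≃g Gsi (reps j) i) := by
  set S := {s : ℕ → ℕ | SegPreserving s ∧
    ∃ φ : Gsi s i →g H, Function.Injective φ ∧ φ (Gsi.vertex i 0) = v}
  suffices h : ∃ reps : Fin (Δ ^ (5 * 2 ^ i)) → (ℕ → ℕ), ∀ s ∈ S, ∃ j, Gsi (reps j) i = Gsi s i by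
    obtain ⟨reps, hreps⟩ := h
    refine ⟨reps, fun s hs ⟨φ, hφ, h₀⟩ => ?_⟩
    obtain ⟨j, hj⟩ := hreps s ⟨hs, φ, hφ, by rwa [Gsi.vertex_of_mem]⟩
    exact ⟨j, ⟨hj ▸ SimpleGraph.Iso.refl⟩⟩
  rcases S.eq_empty_or_nonempty with hS | ⟨s₀, -, φ₀, hφ₀, -⟩
  · exact ⟨fun _ => id, by simp [hS]⟩
  have hΔ : 2 ≤ Δ := (Gsi.two_le_ncard_neighborSet φ₀ hφ₀ (hdeg _).1).trans (hdeg _).2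
  rcases Nat.eq_zero_or_pos i with rfl | hi
  · refine exists_cover_of_code ?_ S (Gsi · 0) (fun s => decide (s.1 1 = 1)) fun s t hst =>
      Gsi.zero_eq_of_apply_one_eq ?_
    · simpa using hΔ.trans (Nat.le_self_pow (by norm_num) Δ)
    · have := s.2.1.apply_one_eq_one_or_two
      have := t.2.1.apply_one_eq_one_or_two
      simp only [decide_eq_decide] at hst
      omega
  · obtain ⟨E, hE⟩ := H.exists_injOn_neighborSet (by omega) hdeg
    choose φ hφ h₀ using fun s : S => s.2.2
    refine exists_cover_of_code ?_ S (Gsi · i) (fun s => Gsi.embeddingCode E (φ s)) fun s t hst =>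
      Gsi.eq_of_embeddingCode_eq hE hi s.2.1 t.2.1 _ _ (hφ t) ((h₀ s).trans (h₀ t).symm) hst
    simp only [Fintype.card_prod, Fintype.card_fun, Fintype.card_fin, ← pow_add]
    exact (congrArg (Δ ^ ·) (by ring)).le
end

section
/- There is no countable simple graph H with bounded maximum degree that contains every connected graph of maximum degree at most 3 as a subgraph. -/
/-!
Let `H` have maximum degree `Δ` and number the neighbours of each vertex by `Fin (Δ + 1)`.
A path from a fixed vertex `w` is determined by the numbers of its successive steps, and a
chord leaving a known vertex by one more number. Consider a path `0, 1, 2, …` with, for a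
permutation `π` of `Fin t`, chords from `ℓ + 1 + a` to `ℓ + t + 2 + π a`. Only its first
`ℓ + 2t + 2` vertices matter, so copies of it in `H` starting at `w` exist for at most
`(Δ + 1) ^ (ℓ + 3t + 1)` permutations. That is less than `t!` for large `t`, so some `π`
admits no copy starting at `w`.

Enumerate the vertices of `H` as `w₀, w₁, …`. At the `n`-th vertex of a ray, attach a further
ray carrying the chords of a permutation that defeats `wₙ` with `ℓ = n`. The result is
connected and has maximum degree 3. Suppose it were contained in `H`, and the start of the
main ray went to `wᵢ`. Then the main ray up to its `i`-th vertex, followed by the `i`-th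
attached ray, would give a forbidden copy starting at `wᵢ`.
-/

open SimpleGraph Set Function

namespace SubcubicUniversal

lemma hasse_nat_adj {j k : ℕ} : (hasse ℕ).Adj j k ↔ k = j + 1 ∨ j = k + 1 := by
  simp [hasse_adj, eq_comm]

lemma neighborSet_hasse_nat_subset (n : ℕ) : (hasse ℕ).neighborSet n ⊆ {n + 1, n - 1} := by
  intro k hk
  rcases hasse_nat_adj.1 hk with rfl | rfl <;> simp

lemma encard_neighborSet_hasse_nat_le (n : ℕ) : ((hasse ℕ).neighborSet n).encard ≤ 2 :=
  (encard_le_encard (neighborSet_hasse_nat_subset n)).trans <|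
    (encard_insert_le _ _).trans (by rw [encard_singleton]; rfl)

lemma neighborSet_hasse_nat_zero : (hasse ℕ).neighborSet 0 = {1} := by
  ext k
  simp [eq_comm]

def permChords (ℓ : ℕ) {t : ℕ} (π : Equiv.Perm (Fin t)) : SimpleGraph ℕ :=
  fromRel fun j k => ∃ a : Fin t, j = ℓ + 1 + a ∧ k = ℓ + t + 2 + π a

def chordedPath (ℓ : ℕ) {t : ℕ} (π : Equiv.Perm (Fin t)) : SimpleGraph ℕ :=
  hasse ℕ ⊔ permChords ℓ π

section ChordedPath

variable (ℓ : ℕ) {t : ℕ} (π : Equiv.Perm (Fin t))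

lemma hasse_le_chordedPath : hasse ℕ ≤ chordedPath ℓ π := le_sup_left

lemma chordedPath_adj_succ (k : ℕ) : (chordedPath ℓ π).Adj k (k + 1) :=
  hasse_le_chordedPath ℓ π (hasse_nat_adj.2 (Or.inl rfl))

lemma chordedPath_adj_chord (a : Fin t) :
    (chordedPath ℓ π).Adj (ℓ + 1 + a) (ℓ + t + 2 + π a) :=
  Or.inr ⟨by omega, Or.inl ⟨a, rfl, rfl⟩⟩

lemma encard_neighborSet_permChords_le_one (j : ℕ) :
    ((permChords ℓ π).neighborSet j).encard ≤ 1 := by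
  rw [encard_le_one_iff]
  rintro k k' ⟨-, ⟨a, rfl, rfl⟩ | ⟨a, rfl, ha⟩⟩ ⟨-, ⟨b, hb, rfl⟩ | ⟨b, rfl, hb⟩⟩
  · obtain rfl : a = b := Fin.ext (by omega)
    rfl
  · omega
  · omega
  · obtain rfl : a = b := π.injective (Fin.ext (by omega))
    rfl

lemma encard_neighborSet_chordedPath_le (j : ℕ) :
    ((chordedPath ℓ π).neighborSet j).encard ≤ 3 :=
  (encard_union_le _ _).trans <|
    add_le_add (encard_neighborSet_hasse_nat_le j) (encard_neighborSet_permChords_le_one ℓ π j)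

lemma neighborSet_chordedPath_zero_zero : (chordedPath 0 π).neighborSet 0 = {1} := by
  have hchords : (permChords 0 π).neighborSet 0 = ∅ := by
    refine eq_empty_of_forall_notMem ?_
    rintro k ⟨-, ⟨a, h, -⟩ | ⟨a, -, h⟩⟩ <;> omega
  rw [chordedPath, neighborSet_sup, hchords, union_empty, neighborSet_hasse_nat_zero]

end ChordedPath

section Counting

variable {W : Type*} {H : SimpleGraph W}

lemma exists_portNumbering {Δ : ℕ} (hdeg : ∀ w, (H.neighborSet w).encard ≤ Δ) :
    ∃ c : W → W → Fin (Δ + 1), ∀ w, InjOn (c w) (H.neighborSet w) := by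
  have hle (w : W) : (H.neighborSet w).encard ≤ (univ : Set (Fin (Δ + 1))).encard := by
    simpa using (hdeg w).trans (by norm_num)
  choose c _ hc using fun w =>
    (finite_of_encard_le_coe (hdeg w)).exists_injOn_of_encard_le (hle w)
  exact ⟨c, hc⟩

lemma eq_of_portCode_eq {D : ℕ} {c : W → W → Fin D} (hc : ∀ w, InjOn (c w) (H.neighborSet w))
    {f g : ℕ → W} (hf : ∀ k, H.Adj (f k) (f (k + 1))) (hg : ∀ k, H.Adj (g k) (g (k + 1)))
    (h0 : f 0 = g 0) {n : ℕ} (hcode : ∀ k < n, c (f k) (f (k + 1)) = c (g k) (g (k + 1))) :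
    ∀ k ≤ n, f k = g k := by
  intro k hk
  induction k with
  | zero => exact h0
  | succ k ih =>
    have hk' := ih (by omega)
    refine hc (f k) (hf k) (hk' ▸ hg k) ?_
    rw [hcode k (by omega), hk']

lemma perm_eq_of_portCode_eq {D ℓ t : ℕ} {c : W → W → Fin D}
    (hc : ∀ w, InjOn (c w) (H.neighborSet w)) {π π' : Equiv.Perm (Fin t)}
    (f : (chordedPath ℓ π).Copy H) (f' : (chordedPath ℓ π').Copy H) (h0 : f 0 = f' 0)
    (hpath : ∀ k < ℓ + 2 * t + 1, c (f k) (f (k + 1)) = c (f' k) (f' (k + 1)))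
    (hchord : ∀ a : Fin t, c (f (ℓ + 1 + a)) (f (ℓ + t + 2 + π a)) =
      c (f' (ℓ + 1 + a)) (f' (ℓ + t + 2 + π' a))) :
    π = π' := by
  have hagree := eq_of_portCode_eq (f := f) (g := f') hc
    (fun k => f.toHom.map_adj (chordedPath_adj_succ ℓ π k))
    (fun k => f'.toHom.map_adj (chordedPath_adj_succ ℓ π' k)) h0 hpath
  ext a
  have hsrc := hagree (ℓ + 1 + a) (by omega)
  have htgt' := hagree (ℓ + t + 2 + π' a) (by omega)
  have htgt : f (ℓ + t + 2 + π a) = f (ℓ + t + 2 + π' a) := by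
    refine hc (f (ℓ + 1 + a)) ?_ ?_ ?_
    · exact f.toHom.map_adj (chordedPath_adj_chord ℓ π a)
    · rw [mem_neighborSet, hsrc, htgt']
      exact f'.toHom.map_adj (chordedPath_adj_chord ℓ π' a)
    · rw [hchord a, hsrc, htgt']
  have := f.injective htgt
  omega

theorem exists_perm_forall_copy_ne {Δ : ℕ} (hdeg : ∀ w, (H.neighborSet w).encard ≤ Δ)
    (w : W) (ℓ : ℕ) :
    ∃ (t : ℕ) (π : Equiv.Perm (Fin t)), ∀ f : (chordedPath ℓ π).Copy H, f 0 ≠ w := by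
  obtain ⟨c, hc⟩ := exists_portNumbering hdeg
  obtain ⟨t, ht⟩ :=
    (Nat.eventually_mul_pow_lt_factorial_sub ((Δ + 1) ^ (ℓ + 1)) ((Δ + 1) ^ 3) 0).exists
  rw [Nat.sub_zero] at ht
  refine ⟨t, ?_⟩
  by_contra! hall
  choose f hf using hall
  let code (π : Equiv.Perm (Fin t)) :
      (Fin (ℓ + 2 * t + 1) → Fin (Δ + 1)) × (Fin t → Fin (Δ + 1)) :=
    (fun k => c (f π k) (f π (k + 1)), fun a => c (f π (ℓ + 1 + a)) (f π (ℓ + t + 2 + π a)))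
  have hcode : Injective code := fun π π' h =>
    perm_eq_of_portCode_eq hc (f π) (f π') ((hf π).trans (hf π').symm)
      (fun k hk => congr_fun (congr_arg Prod.fst h) ⟨k, hk⟩) (congr_fun (congr_arg Prod.snd h))
  have hcard := Fintype.card_le_of_injective code hcode
  simp only [Fintype.card_perm, Fintype.card_prod, Fintype.card_fun, Fintype.card_fin] at hcard
  have : (Δ + 1) ^ (ℓ + 2 * t + 1) * (Δ + 1) ^ t = (Δ + 1) ^ (ℓ + 1) * ((Δ + 1) ^ 3) ^ t := by
    rw [← pow_add, ← pow_mul, ← pow_add]; ring_nf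
  omega

end Counting

section Diagonal

def rayGraph : SimpleGraph (ℕ × ℕ) where
  Adj p q := p.2 = 0 ∧ q.2 = 0 ∧ (hasse ℕ).Adj p.1 q.1
  symm.symm _ _ h := ⟨h.2.1, h.1, h.2.2.symm⟩
  loopless.irrefl _ h := h.2.2.ne rfl

def fibreGraph (F : ℕ → SimpleGraph ℕ) : SimpleGraph (ℕ × ℕ) where
  Adj p q := p.1 = q.1 ∧ (F p.1).Adj p.2 q.2
  symm.symm _ _ h := ⟨h.1.symm, h.1 ▸ h.2.symm⟩
  loopless.irrefl _ h := h.2.ne rfl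

lemma neighborSet_rayGraph_subset (p : ℕ × ℕ) :
    rayGraph.neighborSet p ⊆ (·, 0) '' (hasse ℕ).neighborSet p.1 :=
  fun q ⟨_, hq, hadj⟩ => ⟨q.1, hadj, Prod.ext rfl hq.symm⟩

lemma neighborSet_rayGraph_of_ne_zero {p : ℕ × ℕ} (hp : p.2 ≠ 0) : rayGraph.neighborSet p = ∅ :=
  eq_empty_of_forall_notMem fun _ hq => hp hq.1

lemma neighborSet_fibreGraph (F : ℕ → SimpleGraph ℕ) (p : ℕ × ℕ) :
    (fibreGraph F).neighborSet p = Prod.mk p.1 '' (F p.1).neighborSet p.2 := by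
  ext ⟨m, k⟩
  constructor
  · rintro ⟨rfl, h⟩
    exact ⟨k, h, rfl⟩
  · rintro ⟨k, h, ⟨⟩⟩
    exact ⟨rfl, h⟩

variable {t : ℕ → ℕ} (π : ∀ n, Equiv.Perm (Fin (t n)))

def diagonalGraph : SimpleGraph (ℕ × ℕ) :=
  rayGraph ⊔ fibreGraph fun n => chordedPath 0 (π n)

lemma encard_neighborSet_diagonalGraph_le (p : ℕ × ℕ) :
    ((diagonalGraph π).neighborSet p).encard ≤ 3 := by
  rw [diagonalGraph, neighborSet_sup, neighborSet_fibreGraph]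
  obtain ⟨n, _ | j⟩ := p
  · rw [neighborSet_chordedPath_zero_zero, image_singleton]
    calc _ ≤ (rayGraph.neighborSet (n, 0)).encard + ({(n, 1)} : Set (ℕ × ℕ)).encard :=
          encard_union_le _ _
      _ ≤ 2 + 1 := by
          rw [encard_singleton]
          gcongr
          exact (encard_le_encard (neighborSet_rayGraph_subset _)).trans <|
            (encard_image_le _ _).trans (encard_neighborSet_hasse_nat_le n)
  · rw [neighborSet_rayGraph_of_ne_zero (Nat.succ_ne_zero j), empty_union]
    exact (encard_image_le _ _).trans (encard_neighborSet_chordedPath_le _ _ _)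

lemma diagonalGraph_connected : (diagonalGraph π).Connected := by
  let ray : hasse ℕ →g diagonalGraph π := ⟨fun n => (n, 0), fun h => Or.inl ⟨rfl, rfl, h⟩⟩
  let fibre (n : ℕ) : hasse ℕ →g diagonalGraph π :=
    ⟨fun j => (n, j), fun h => Or.inr ⟨rfl, hasse_le_chordedPath _ _ h⟩⟩
  have hreach (p : ℕ × ℕ) : (diagonalGraph π).Reachable (0, 0) p :=
    ((hasse_preconnected_of_succ ℕ 0 p.1).map ray).trans
      ((hasse_preconnected_of_succ ℕ 0 p.2).map (fibre p.1))
  exact ⟨fun p q => (hreach p).symm.trans (hreach q)⟩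

def diagonalPath (n k : ℕ) : ℕ × ℕ := if k ≤ n then (k, 0) else (n, k - n)

lemma diagonalPath_injective (n : ℕ) : Injective (diagonalPath n) := by
  intro j k h
  simp only [diagonalPath] at h
  split_ifs at h <;> simp only [Prod.mk.injEq] at h <;> omega

lemma diagonalGraph_adj_diagonalPath_succ (n k : ℕ) :
    (diagonalGraph π).Adj (diagonalPath n k) (diagonalPath n (k + 1)) := by
  unfold diagonalPath
  split_ifs
  · exact Or.inl ⟨rfl, rfl, hasse_nat_adj.2 (Or.inl rfl)⟩
  · obtain rfl : k = n := by omega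
    exact Or.inr ⟨rfl, by simpa using chordedPath_adj_succ 0 (π k) 0⟩
  · omega
  · refine Or.inr ⟨rfl, ?_⟩
    convert chordedPath_adj_succ 0 (π n) (k - n) using 1
    omega

lemma diagonalGraph_adj_diagonalPath_chord (n : ℕ) (a : Fin (t n)) :
    (diagonalGraph π).Adj (diagonalPath n (n + 1 + a))
      (diagonalPath n (n + t n + 2 + π n a)) := by
  unfold diagonalPath
  rw [if_neg (by omega), if_neg (by omega)]
  refine Or.inr ⟨rfl, ?_⟩
  convert chordedPath_adj_chord 0 (π n) a using 1 <;> omega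

def diagonalCopy (n : ℕ) : (chordedPath n (π n)).Copy (diagonalGraph π) where
  toHom := ⟨diagonalPath n, by
    rintro j k (h | ⟨-, ⟨a, rfl, rfl⟩ | ⟨a, rfl, rfl⟩⟩)
    · rcases hasse_nat_adj.1 h with rfl | rfl
      · exact diagonalGraph_adj_diagonalPath_succ π n j
      · exact (diagonalGraph_adj_diagonalPath_succ π n k).symm
    · exact diagonalGraph_adj_diagonalPath_chord π n a
    · exact (diagonalGraph_adj_diagonalPath_chord π n a).symm⟩
  injective' := diagonalPath_injective n

lemma diagonalCopy_zero (n : ℕ) : diagonalCopy π n 0 = (0, 0) := by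
  simp [diagonalCopy, diagonalPath]

end Diagonal

end SubcubicUniversal

open SubcubicUniversal

/-- There is no countable simple graph of bounded maximum degree containing
every connected graph of maximum degree at most `3` as a subgraph. -/
theorem stmt_18 :
    ¬ ∃ (W : Type) (_ : Countable W) (H : SimpleGraph W) (Δ : ℕ),
        (∀ w : W, (H.neighborSet w).Finite ∧ (H.neighborSet w).ncard ≤ Δ) ∧
        ∀ (U : Type) (G : SimpleGraph U), G.Connected →
          (∀ u : U, (G.neighborSet u).Finite ∧ (G.neighborSet u).ncard ≤ 3) →
          ∃ f : U → W, Function.Injective f ∧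
            ∀ u u' : U, G.Adj u u' → H.Adj (f u) (f u') := by
  rintro ⟨W, _, H, Δ, hdeg, huniv⟩
  have hcopy {U : Type} (G : SimpleGraph U) (hG : G.Connected)
      (h3 : ∀ u, (G.neighborSet u).encard ≤ 3) : Nonempty (G.Copy H) := by
    obtain ⟨f, hf, hadj⟩ := huniv U G hG fun u => encard_le_coe_iff_finite_ncard_le.1 (h3 u)
    exact ⟨⟨⟨f, hadj _ _⟩, hf⟩⟩
  obtain ⟨f₀⟩ := hcopy (⊥ : SimpleGraph Unit) (connected_bot_iff.2 ⟨inferInstance, inferInstance⟩)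
    (by simp)
  have : Nonempty W := ⟨f₀ ()⟩
  obtain ⟨enum, henum⟩ := exists_surjective_nat W
  choose t π hπ using fun n => exists_perm_forall_copy_ne
    (fun w => encard_le_coe_iff_finite_ncard_le.2 (hdeg w)) (enum n) n
  obtain ⟨f⟩ := hcopy (diagonalGraph π) (diagonalGraph_connected π)
    (encard_neighborSet_diagonalGraph_le π)
  obtain ⟨i, hi⟩ := henum (f (0, 0))
  exact hπ i (f.comp (diagonalCopy π i)) (by rw [Copy.comp_apply, diagonalCopy_zero, hi])
end
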